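/- Let d := -2 + i ∈ ℤ[i] and let 𝐚 := (2-3i, -1-2i, -3+i). For a finite nonempty sequence 𝐱 = (x₁, ..., x_l) of Gaussian integers define f(𝐱) := (x₁, ..., x_l, d, -x_l, -x_{l-1}, ..., -x₁) and g(𝐱) := (x₁, ..., x_{l-1}, x_l + 1, x_l - 1, x_{l-1}, ..., x₁). Then for every n ≥ 0 and every choice h₁, ..., hₙ ∈ {f, g}, the sequence 𝐜 = (c₁, ..., c_L) := hₙ(h_{n-1}(⋯h₁(𝐚)⋯)) is a valid HCF digit sequence: there exists z ∈ 𝔉 such that for every j with 1 ≤ j ≤ L one has T^{j-1}(z) ≠ 0 and a_j(z) = c_j. -/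

import Mathlib

open Complex

/-- The nearest Gaussian integer to a complex number, as a complex number. -/
noncomputable def nearestGaussian (z : ℂ) : ℂ :=
  (⌊z.re + 1 / 2⌋ : ℤ) + (⌊z.im + 1 / 2⌋ : ℤ) * I

/-- The fundamental domain `𝔉 = {z : [z] = 0}`. -/
noncomputable def Fdom : Set ℂ := {z : ℂ | nearestGaussian z = 0}

/-- The complex Gauss map on the fundamental domain. -/
noncomputable def gaussT (z : ℂ) : ℂ :=
  if z = 0 then 0 else z⁻¹ - nearestGaussian z⁻¹

/-- The digit `d = -2 + i`. -/
noncomputable def dG : ℂ := -2 + I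

/-- The folding operation `f(𝐱) = (x₁, ..., x_l, d, -x_l, ..., -x₁)`. -/
noncomputable def fop (x : List ℂ) : List ℂ :=
  x ++ [dG] ++ (x.reverse.map fun t => -t)

/-- The operation `g(𝐱) = (x₁, ..., x_{l-1}, x_l + 1, x_l - 1, x_{l-1}, ..., x₁)`. -/
noncomputable def gop (x : List ℂ) : List ℂ :=
  x.dropLast ++ [x.getLastD 0 + 1, x.getLastD 0 - 1] ++ x.dropLast.reverse

/-- The seed word `𝐚 = (2 - 3i, -1 - 2i, -3 + i)`. -/
noncomputable def seedA : List ℂ := [2 - 3 * I, -1 - 2 * I, -3 + I]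

/-!
A word `a₁ … a_L` over `ℤ[i]` is read as the finite continued fraction
`cfValue = 1 / (a₁ + 1 / (a₂ + ⋯ + 1 / a_L))`. If every tail value lies in `𝔉 \ {0}`, then `T`
drops the first letter and `[1 / z]` returns it, so the word is the HCF expansion of its value.

The tail values are controlled by a finite automaton on fourteen digits. Each digit `a` carries a
closed disk `D(a) ⊆ 𝔉 \ {0}` with rational data; along every edge `a → b` the map
`w ↦ 1 / (a + w)` sends `D(b)` into `D(a)`, and every final digit `b` has `1 / b ∈ D(b)`. Since
inversion maps disks to disks, each of these inclusions is a finite computation over `ℚ`.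

Finally, every word generated from `𝐚` by `f` and `g` is an accepted path of the automaton. Both
operations reflect the word, and the edge set is invariant under `(a, b) ↦ (b, a)` and
`(a, b) ↦ (-b, -a)`. The new letters are glued in through a few edges that depend only on the
last two letters, and those take just three values.
-/

open ComplexConjugate Metric Set List

local notation "ℤ[i]" => GaussianInt

lemma mem_Fdom_iff {z : ℂ} :
    z ∈ Fdom ↔ (-1 / 2 ≤ z.re ∧ z.re < 1 / 2) ∧ (-1 / 2 ≤ z.im ∧ z.im < 1 / 2) := by
  have key (t : ℝ) : ⌊t + 1 / 2⌋ = 0 ↔ -1 / 2 ≤ t ∧ t < 1 / 2 := by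
    rw [Int.floor_eq_zero_iff, Set.mem_Ico]
    constructor <;> rintro ⟨h₁, h₂⟩ <;> constructor <;> linarith
  have hz : z ∈ Fdom ↔ ⌊z.re + 1 / 2⌋ = 0 ∧ ⌊z.im + 1 / 2⌋ = 0 := by
    simp [Fdom, nearestGaussian, Complex.ext_iff]
  rw [hz, key, key]

lemma zero_mem_Fdom : (0 : ℂ) ∈ Fdom := by
  rw [mem_Fdom_iff]; norm_num

lemma nearestGaussian_gaussianInt_add (a : ℤ[i]) (z : ℂ) :
    nearestGaussian (a + z) = a + nearestGaussian z := by
  have hre : (a + z).re = (a.re : ℤ) + z.re := by rw [add_re, GaussianInt.intCast_re]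
  have him : (a + z).im = (a.im : ℤ) + z.im := by rw [add_im, GaussianInt.intCast_im]
  rw [nearestGaussian, nearestGaussian, hre, him, add_assoc, add_assoc, Int.floor_intCast_add,
    Int.floor_intCast_add, GaussianInt.toComplex_def]
  push_cast
  ring

lemma gaussT_inv_gaussianInt_add (a : ℤ[i]) {v : ℂ} (hv : v ∈ Fdom) (h : (a : ℂ) + v ≠ 0) :
    gaussT ((a : ℂ) + v)⁻¹ = v := by
  rw [gaussT, if_neg (inv_ne_zero h), inv_inv, nearestGaussian_gaussianInt_add, hv.out]
  ring

def HasHCFDigits (z : ℂ) (c : List ℂ) : Prop :=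
  ∀ (j : ℕ) (hj : j < c.length),
    gaussT^[j] z ≠ 0 ∧ nearestGaussian (gaussT^[j] z)⁻¹ = c.get ⟨j, hj⟩

lemma hasHCFDigits_nil (z : ℂ) : HasHCFDigits z [] := fun _ hj => absurd hj (Nat.not_lt_zero _)

lemma HasHCFDigits.cons {z a : ℂ} {c : List ℂ} (hz : z ≠ 0) (ha : nearestGaussian z⁻¹ = a)
    (hc : HasHCFDigits (gaussT z) c) : HasHCFDigits z (a :: c) := by
  rintro (_ | j) hj
  · exact ⟨hz, ha⟩
  · rw [Function.iterate_succ_apply]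
    exact hc j (Nat.lt_of_succ_lt_succ hj)

noncomputable def cfValue (x : List ℤ[i]) : ℂ := x.foldr (fun a w => ((a : ℂ) + w)⁻¹) 0

@[simp] lemma cfValue_nil : cfValue [] = 0 := rfl

@[simp] lemma cfValue_cons (a : ℤ[i]) (t : List ℤ[i]) :
    cfValue (a :: t) = ((a : ℂ) + cfValue t)⁻¹ := rfl

lemma hasHCFDigits_cfValue {x : List ℤ[i]}
    (hx : ∀ a t, a :: t <:+ x → cfValue (a :: t) ∈ Fdom \ {0}) :
    HasHCFDigits (cfValue x) (x.map (↑)) := by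
  induction x with
  | nil => exact hasHCFDigits_nil _
  | cons a t ih =>
    have ht : ∀ b s, b :: s <:+ t → cfValue (b :: s) ∈ Fdom \ {0} :=
      fun b s h => hx b s (h.trans (suffix_cons a t))
    have hvt : cfValue t ∈ Fdom := by
      cases t with
      | nil => exact zero_mem_Fdom
      | cons b s => exact (ht b s suffix_rfl).1
    have hne : cfValue (a :: t) ≠ 0 := (hx a t suffix_rfl).2
    have hden : (a : ℂ) + cfValue t ≠ 0 := by simpa using hne
    refine .cons hne ?_ ?_
    · rw [cfValue_cons, inv_inv, nearestGaussian_gaussianInt_add, hvt.out, add_zero]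
    · rw [cfValue_cons, gaussT_inv_gaussianInt_add a hvt hden]
      exact ih ht

theorem Complex.inv_mem_closedBall {U w : ℂ} {r : ℝ} (hU : r ^ 2 < normSq U)
    (hw : w ∈ closedBall U r) :
    w⁻¹ ∈ closedBall (conj U / ((normSq U - r ^ 2 : ℝ) : ℂ)) (r / (normSq U - r ^ 2)) := by
  rw [mem_closedBall, dist_eq] at hw
  have hr : 0 ≤ r := (_root_.norm_nonneg _).trans hw
  set N := normSq U - r ^ 2 with hN_def
  have hN : 0 < N := sub_pos.2 hU
  have hδ : normSq (w - U) ≤ r ^ 2 := by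
    rw [← Complex.sq_norm]; exact pow_le_pow_left₀ (_root_.norm_nonneg _) hw 2
  have hw0 : w ≠ 0 := by
    rintro rfl
    rw [zero_sub, normSq_neg] at hδ
    linarith
  have key : w⁻¹ - conj U / (N : ℂ) = -((r : ℂ) ^ 2 + conj U * (w - U)) / (N * w) := by
    have hNC : (N : ℂ) ≠ 0 := ofReal_ne_zero.2 hN.ne'
    have hUU : conj U * U = ((normSq U : ℝ) : ℂ) := by rw [mul_comm, mul_conj]
    field_simp
    rw [hN_def]
    push_cast
    linear_combination -hUU
  -- (|U|² - r²)(r² - |w - U|²) ≥ 0 is exactly r²|w|² - |r² + conj U (w - U)|²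
  have hsq : normSq ((r : ℂ) ^ 2 + conj U * (w - U)) ≤ r ^ 2 * normSq w := by
    have := mul_nonneg hN.le (sub_nonneg.2 hδ)
    simp only [hN_def, normSq_apply, sub_re, sub_im, add_re, add_im, mul_re, mul_im, conj_re,
      conj_im, ← ofReal_pow, ofReal_re, ofReal_im] at this ⊢
    nlinarith [this]
  have hnorm : ‖(r : ℂ) ^ 2 + conj U * (w - U)‖ ≤ r * ‖w‖ := by
    apply le_of_pow_le_pow_left₀ two_ne_zero (by positivity)
    rwa [mul_pow, Complex.sq_norm, Complex.sq_norm]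
  rw [mem_closedBall, dist_eq, key, norm_div, norm_neg, norm_mul, norm_real,
    Real.norm_of_nonneg hN.le, div_le_div_iff₀ (by positivity) hN]
  calc _ ≤ r * ‖w‖ * N := by gcongr
    _ = r * (N * ‖w‖) := by ring

structure RatDisk where
  re : ℚ
  im : ℚ
  radius : ℚ

namespace RatDisk

noncomputable def center (D : RatDisk) : ℂ := (D.re : ℂ) + (D.im : ℂ) * I

def toSet (D : RatDisk) : Set ℂ := closedBall D.center D.radius

@[simp] lemma center_re (D : RatDisk) : D.center.re = D.re := by simp [center]

@[simp] lemma center_im (D : RatDisk) : D.center.im = D.im := by simp [center]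

/-- When `0 ∉ a + D`, this is the image of `D` under `w ↦ (a + w)⁻¹`: writing `U` for the centre
of `a + D` and `N = |U|² - r²`, the image is the disk with centre `conj U / N` and radius `r / N`. -/
def invTranslate (a : ℤ[i]) (D : RatDisk) : RatDisk :=
  let x := a.re + D.re
  let y := a.im + D.im
  let N := x ^ 2 + y ^ 2 - D.radius ^ 2
  ⟨x / N, -y / N, D.radius / N⟩

abbrev IsSubdisk (D E : RatDisk) : Prop :=
  D.radius ≤ E.radius ∧ (D.re - E.re) ^ 2 + (D.im - E.im) ^ 2 ≤ (E.radius - D.radius) ^ 2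

abbrev InvTranslatesInto (a : ℤ[i]) (D E : RatDisk) : Prop :=
  D.radius ^ 2 < (a.re + D.re) ^ 2 + (a.im + D.im) ^ 2 ∧ (D.invTranslate a).IsSubdisk E

abbrev InPuncturedFdom (D : RatDisk) : Prop :=
  (-1 / 2 ≤ D.re - D.radius ∧ D.re + D.radius < 1 / 2) ∧
    (-1 / 2 ≤ D.im - D.radius ∧ D.im + D.radius < 1 / 2) ∧
    (D.radius < 0 ∨ D.radius ^ 2 < D.re ^ 2 + D.im ^ 2)

lemma dist_center_sq (D E : RatDisk) :
    dist D.center E.center ^ 2 = (((D.re - E.re) ^ 2 + (D.im - E.im) ^ 2 : ℚ) : ℝ) := by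
  rw [dist_eq, Complex.sq_norm, normSq_apply]
  push_cast
  simp only [sub_re, sub_im, center_re, center_im]
  ring

lemma toSet_subset_of_isSubdisk {D E : RatDisk} (h : D.IsSubdisk E) : D.toSet ⊆ E.toSet := by
  apply closedBall_subset_closedBall'
  have hdist : dist D.center E.center ≤ E.radius - D.radius := by
    apply le_of_pow_le_pow_left₀ two_ne_zero (by exact_mod_cast sub_nonneg.2 h.1)
    rw [dist_center_sq]
    exact_mod_cast h.2
  linarith

lemma mapsTo_invTranslate (a : ℤ[i]) (D : RatDisk)
    (h : D.radius ^ 2 < (a.re + D.re) ^ 2 + (a.im + D.im) ^ 2) :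
    MapsTo (fun w => ((a : ℂ) + w)⁻¹) D.toSet (D.invTranslate a).toSet := by
  intro w hw
  set U : ℂ := a + D.center
  have hUre : U.re = ((a.re + D.re : ℚ) : ℝ) := by
    simp [U, ← GaussianInt.intCast_re]
  have hUim : U.im = ((a.im + D.im : ℚ) : ℝ) := by
    simp [U, ← GaussianInt.intCast_im]
  have hU : normSq U = (((a.re + D.re) ^ 2 + (a.im + D.im) ^ 2 : ℚ) : ℝ) := by
    rw [normSq_apply, hUre, hUim]
    push_cast
    ring
  have hr : (D.radius : ℝ) ^ 2 < normSq U := by rw [hU]; exact_mod_cast h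
  have hmem : (a : ℂ) + w ∈ closedBall U D.radius := by
    rwa [mem_closedBall, dist_add_left]
  change _ ∈ closedBall (D.invTranslate a).center (D.invTranslate a).radius
  convert Complex.inv_mem_closedBall hr hmem using 2
  · apply Complex.ext
    · rw [div_ofReal_re, conj_re, hUre, hU, center_re]
      simp [invTranslate]
    · rw [div_ofReal_im, conj_im, hUim, hU, center_im]
      simp [invTranslate]
  · simp [invTranslate, hU]

lemma mapsTo_of_invTranslatesInto {a : ℤ[i]} {D E : RatDisk} (h : InvTranslatesInto a D E) :
    MapsTo (fun w => ((a : ℂ) + w)⁻¹) D.toSet E.toSet :=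
  (mapsTo_invTranslate a D h.1).mono_right (toSet_subset_of_isSubdisk h.2)

lemma toSet_subset_of_inPuncturedFdom {D : RatDisk} (h : D.InPuncturedFdom) :
    D.toSet ⊆ Fdom \ {0} := by
  intro w hw
  have hw' : ‖w - D.center‖ ≤ D.radius := by rwa [toSet, mem_closedBall, dist_eq] at hw
  have hre := (abs_re_le_norm _).trans hw'
  have him := (abs_im_le_norm _).trans hw'
  rw [sub_re, center_re] at hre
  rw [sub_im, center_im] at him
  rw [abs_le] at hre him
  obtain ⟨⟨h₁, h₂⟩, ⟨h₃, h₄⟩, h₀⟩ := h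
  have h₁' : (-1 / 2 : ℝ) ≤ D.re - D.radius := by exact_mod_cast h₁
  have h₂' : (D.re : ℝ) + D.radius < 1 / 2 := by simpa using (Rat.cast_lt (K := ℝ)).2 h₂
  have h₃' : (-1 / 2 : ℝ) ≤ D.im - D.radius := by exact_mod_cast h₃
  have h₄' : (D.im : ℝ) + D.radius < 1 / 2 := by simpa using (Rat.cast_lt (K := ℝ)).2 h₄
  refine ⟨mem_Fdom_iff.2 ⟨⟨by linarith, by linarith⟩, by linarith, by linarith⟩, ?_⟩
  rintro rfl
  rw [zero_sub, norm_neg] at hw'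
  have hr : (0 : ℝ) ≤ D.radius := (_root_.norm_nonneg _).trans hw'
  rcases h₀ with h₀ | h₀
  · have : (D.radius : ℝ) < 0 := by exact_mod_cast h₀
    linarith
  · have h₀' : (D.radius : ℝ) ^ 2 < D.re ^ 2 + D.im ^ 2 := by exact_mod_cast h₀
    have := pow_le_pow_left₀ (_root_.norm_nonneg _) hw' 2
    rw [Complex.sq_norm, normSq_apply, center_re, center_im] at this
    nlinarith

end RatDisk

section DiskChain

variable {R : ℤ[i] → ℤ[i] → Prop} {T : ℤ[i] → Prop} {D : ℤ[i] → Set ℂ}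

lemma cfValue_mem_of_isChain
    (hR : ∀ a b, R a b → MapsTo (fun w => ((a : ℂ) + w)⁻¹) (D b) (D a))
    (hT : ∀ b, T b → (b : ℂ)⁻¹ ∈ D b) :
    ∀ (a : ℤ[i]) (t : List ℤ[i]), IsChain R (a :: t) → (∀ b ∈ (a :: t).getLast?, T b) →
      cfValue (a :: t) ∈ D a := by
  intro a t
  induction t generalizing a with
  | nil => intro _ hl; simpa using hT a (hl a rfl)
  | cons b t ih =>
    intro hc hl
    rw [isChain_cons_cons] at hc
    rw [getLast?_cons_cons] at hl
    exact hR a b hc.1 (ih b hc.2 hl)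

theorem hasHCFDigits_cfValue_of_isChain (hD : ∀ a, D a ⊆ Fdom \ {0})
    (hR : ∀ a b, R a b → MapsTo (fun w => ((a : ℂ) + w)⁻¹) (D b) (D a))
    (hT : ∀ b, T b → (b : ℂ)⁻¹ ∈ D b) {x : List ℤ[i]} (hx : IsChain R x)
    (hl : ∀ b ∈ x.getLast?, T b) :
    cfValue x ∈ Fdom ∧ HasHCFDigits (cfValue x) (x.map (↑)) := by
  have hsuffix : ∀ a t, a :: t <:+ x → cfValue (a :: t) ∈ Fdom \ {0} := by
    rintro a t ⟨l, rfl⟩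
    refine hD a (cfValue_mem_of_isChain hR hT a t (hx.suffix (suffix_append l _)) ?_)
    rwa [getLast?_append_of_ne_nil _ (cons_ne_nil a t)] at hl
  refine ⟨?_, hasHCFDigits_cfValue hsuffix⟩
  cases x with
  | nil => exact zero_mem_Fdom
  | cons a t => exact (hsuffix a t suffix_rfl).1

end DiskChain

def hcfEdges : List (ℤ[i] × ℤ[i]) :=
  [(⟨-4, 1⟩, ⟨-2, 1⟩), (⟨-4, 1⟩, ⟨-1, -2⟩),
   (⟨-3, 1⟩, ⟨-2, 1⟩), (⟨-3, 1⟩, ⟨-1, -2⟩), (⟨-3, 1⟩, ⟨2, -1⟩),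
   (⟨-3, 3⟩, ⟨-1, 3⟩), (⟨-3, 3⟩, ⟨1, 2⟩),
   (⟨-2, 1⟩, ⟨-4, 1⟩), (⟨-2, 1⟩, ⟨-3, 1⟩), (⟨-2, 1⟩, ⟨-2, 3⟩),
   (⟨-2, 1⟩, ⟨-1, -2⟩), (⟨-2, 1⟩, ⟨2, -3⟩), (⟨-2, 1⟩, ⟨3, -1⟩),
   (⟨-2, 3⟩, ⟨-2, 1⟩), (⟨-2, 3⟩, ⟨1, 2⟩), (⟨-2, 3⟩, ⟨2, -1⟩),
   (⟨-1, -2⟩, ⟨-4, 1⟩), (⟨-1, -2⟩, ⟨-3, 1⟩), (⟨-1, -2⟩, ⟨-2, 1⟩),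
   (⟨-1, -2⟩, ⟨1, -3⟩), (⟨-1, -2⟩, ⟨2, -3⟩), (⟨-1, -2⟩, ⟨3, -3⟩),
   (⟨-1, 3⟩, ⟨-3, 3⟩), (⟨-1, 3⟩, ⟨1, 2⟩),
   (⟨1, -3⟩, ⟨-1, -2⟩), (⟨1, -3⟩, ⟨3, -3⟩),
   (⟨1, 2⟩, ⟨-3, 3⟩), (⟨1, 2⟩, ⟨-2, 3⟩), (⟨1, 2⟩, ⟨-1, 3⟩),
   (⟨1, 2⟩, ⟨2, -1⟩), (⟨1, 2⟩, ⟨3, -1⟩), (⟨1, 2⟩, ⟨4, -1⟩),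
   (⟨2, -3⟩, ⟨-2, 1⟩), (⟨2, -3⟩, ⟨-1, -2⟩), (⟨2, -3⟩, ⟨2, -1⟩),
   (⟨2, -1⟩, ⟨-3, 1⟩), (⟨2, -1⟩, ⟨-2, 3⟩), (⟨2, -1⟩, ⟨1, 2⟩),
   (⟨2, -1⟩, ⟨2, -3⟩), (⟨2, -1⟩, ⟨3, -1⟩), (⟨2, -1⟩, ⟨4, -1⟩),
   (⟨3, -3⟩, ⟨-1, -2⟩), (⟨3, -3⟩, ⟨1, -3⟩),
   (⟨3, -1⟩, ⟨-2, 1⟩), (⟨3, -1⟩, ⟨1, 2⟩), (⟨3, -1⟩, ⟨2, -1⟩),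
   (⟨4, -1⟩, ⟨1, 2⟩), (⟨4, -1⟩, ⟨2, -1⟩)]

abbrev HCFEdge (a b : ℤ[i]) : Prop := (a, b) ∈ hcfEdges

def finalDigits : List ℤ[i] := [⟨-3, 1⟩, ⟨-2, 3⟩, ⟨2, -3⟩]

def diskTable : List (ℤ[i] × RatDisk) :=
  [(⟨-4, 1⟩, ⟨-109/500, -7/125, 3/125⟩),
   (⟨-3, 1⟩, ⟨-3/10, -13/125, 57/1000⟩),
   (⟨-3, 3⟩, ⟨-47/250, -171/1000, 9/500⟩),
   (⟨-2, 1⟩, ⟨-383/1000, -41/200, 87/1000⟩),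
   (⟨-2, 3⟩, ⟨-157/1000, -47/200, 23/500⟩),
   (⟨-1, -2⟩, ⟨-28/125, 79/200, 89/1000⟩),
   (⟨-1, 3⟩, ⟨-57/500, -329/1000, 41/1000⟩),
   (⟨1, -3⟩, ⟨57/500, 329/1000, 41/1000⟩),
   (⟨1, 2⟩, ⟨28/125, -79/200, 89/1000⟩),
   (⟨2, -3⟩, ⟨79/500, 47/200, 23/500⟩),
   (⟨2, -1⟩, ⟨383/1000, 41/200, 87/1000⟩),
   (⟨3, -3⟩, ⟨47/250, 171/1000, 9/500⟩),
   (⟨3, -1⟩, ⟨3/10, 21/200, 57/1000⟩),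
   (⟨4, -1⟩, ⟨109/500, 7/125, 3/125⟩)]

/-- Digits outside `diskTable` get the empty disk of radius `-1`. -/
def digitDisk (a : ℤ[i]) : RatDisk := (diskTable.lookup a).getD ⟨0, 0, -1⟩

lemma digitDisk_mem (a : ℤ[i]) :
    digitDisk a ∈ (⟨0, 0, -1⟩ : RatDisk) :: diskTable.map Prod.snd := by
  unfold digitDisk
  cases h : diskTable.lookup a with
  | none => exact mem_cons_self
  | some E =>
    obtain ⟨l₁, l₂, hl, -⟩ := lookup_eq_some_iff.1 h
    simp [hl]

lemma inPuncturedFdom_of_mem_diskTable :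
    ∀ E ∈ (⟨0, 0, -1⟩ : RatDisk) :: diskTable.map Prod.snd, E.InPuncturedFdom := by
  decide +kernel

lemma invTranslatesInto_of_mem_hcfEdges :
    ∀ p ∈ hcfEdges, (digitDisk p.2).InvTranslatesInto p.1 (digitDisk p.1) := by
  decide +kernel

lemma invTranslatesInto_of_mem_finalDigits :
    ∀ b ∈ finalDigits, (⟨0, 0, 0⟩ : RatDisk).InvTranslatesInto b (digitDisk b) := by
  decide +kernel

theorem hasHCFDigits_cfValue_of_isChain_hcfEdges {x : List ℤ[i]} (hx : IsChain HCFEdge x)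
    (hl : ∀ b ∈ x.getLast?, b ∈ finalDigits) :
    cfValue x ∈ Fdom ∧ HasHCFDigits (cfValue x) (x.map (↑)) := by
  refine hasHCFDigits_cfValue_of_isChain (D := fun a => (digitDisk a).toSet)
    (fun a => RatDisk.toSet_subset_of_inPuncturedFdom
      (inPuncturedFdom_of_mem_diskTable _ (digitDisk_mem a)))
    (fun a b hab =>
      RatDisk.mapsTo_of_invTranslatesInto (invTranslatesInto_of_mem_hcfEdges (a, b) hab))
    (fun b hb => ?_) hx hl
  have h0 : (0 : ℂ) ∈ (⟨0, 0, 0⟩ : RatDisk).toSet := by simp [RatDisk.toSet, RatDisk.center]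
  simpa using RatDisk.mapsTo_of_invTranslatesInto (invTranslatesInto_of_mem_finalDigits b hb) h0

section WordOperations

variable {α β : Type*}

def foldWord [Neg α] (d : α) (x : List α) : List α := x ++ [d] ++ x.reverse.map (fun t => -t)

def splitWord [AddGroupWithOne α] (x : List α) : List α :=
  x.dropLast ++ [x.getLastD 0 + 1, x.getLastD 0 - 1] ++ x.dropLast.reverse

lemma map_foldWord [Ring α] [Ring β] (φ : α →+* β) (d : α) (x : List α) :
    (foldWord d x).map φ = foldWord (φ d) (x.map φ) := by
  simp [foldWord, map_reverse]

lemma map_splitWord [Ring α] [Ring β] (φ : α →+* β) (x : List α) :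
    (splitWord x).map φ = splitWord (x.map φ) := by
  have hlast : (x.map φ).getLastD 0 = φ (x.getLastD 0) := by rw [← map_zero φ, getLastD_map]
  simp only [splitWord, map_append, map_reverse, map_dropLast, map_cons, map_nil, map_add,
    map_sub, map_one, hlast]

end WordOperations

lemma fop_eq_foldWord : fop = foldWord dG := rfl

lemma gop_eq_splitWord : gop = splitWord := rfl

lemma foldl_apply_mem {α : Type*} {S : Set α} {fs : List (α → α)}
    (hfs : ∀ f ∈ fs, MapsTo f S S) {x : α} (hx : x ∈ S) : fs.foldl (fun s t => t s) x ∈ S := by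
  induction fs generalizing x with
  | nil => exact hx
  | cons f fs ih => exact ih (fun g hg => hfs g (mem_cons_of_mem f hg)) (hfs f mem_cons_self hx)

def lastPairs : List (ℤ[i] × ℤ[i]) := [(⟨-1, -2⟩, ⟨-3, 1⟩), (⟨1, 2⟩, ⟨-2, 3⟩), (⟨-1, -2⟩, ⟨2, -3⟩)]

/-- `(v.getLastD ⟨-1, -2⟩, b)` is the pair of the last two letters of `x`. -/
def IsGoodWord (x : List ℤ[i]) : Prop :=
  IsChain HCFEdge x ∧
    ∃ v b, x = ⟨2, -3⟩ :: ⟨-1, -2⟩ :: v ++ [b] ∧ (v.getLastD ⟨-1, -2⟩, b) ∈ lastPairs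

lemma hcfEdge_swap : ∀ p ∈ hcfEdges, (p.2, p.1) ∈ hcfEdges := by decide

lemma hcfEdge_neg_swap : ∀ p ∈ hcfEdges, (-p.2, -p.1) ∈ hcfEdges := by decide

lemma lastPairs_spec : ∀ p ∈ lastPairs, p.2 ∈ finalDigits ∧
    HCFEdge p.2 ⟨-2, 1⟩ ∧ HCFEdge ⟨-2, 1⟩ (-p.2) ∧
    HCFEdge p.1 (p.2 + 1) ∧ HCFEdge (p.2 + 1) (p.2 - 1) ∧ HCFEdge (p.2 - 1) p.1 := by
  decide

lemma IsGoodWord.getLast?_mem {x : List ℤ[i]} (hx : IsGoodWord x) :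
    ∀ b ∈ x.getLast?, b ∈ finalDigits := by
  obtain ⟨-, v, b, rfl, hpb⟩ := hx
  intro b' hb'
  rw [getLast?_concat, Option.mem_some_iff] at hb'
  exact hb' ▸ (lastPairs_spec _ hpb).1

lemma isGoodWord_foldWord {x : List ℤ[i]} (hx : IsGoodWord x) :
    IsGoodWord (foldWord ⟨-2, 1⟩ x) := by
  obtain ⟨hc, v, b, rfl, hpb⟩ := hx
  obtain ⟨-, hbd, hdb, -⟩ := lastPairs_spec _ hpb
  have hrev : IsChain HCFEdge ((⟨2, -3⟩ :: ⟨-1, -2⟩ :: v ++ [b]).reverse.map fun t => -t) := by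
    rw [isChain_map, isChain_reverse]
    exact hc.imp fun s t hst => hcfEdge_neg_swap (s, t) hst
  refine ⟨?_, v ++ [b, ⟨-2, 1⟩, -b] ++ v.reverse.map (fun t => -t) ++ [⟨1, 2⟩], ⟨-2, 3⟩,
    ?_, by rw [getLastD_concat]; decide⟩
  · refine (hc.append (isChain_singleton _) ?_).append hrev ?_
    · rw [getLast?_concat]; simpa using hbd
    · rw [getLast?_concat]; simpa using hdb
  · simp [foldWord, Zsqrtd.ext_iff]

lemma isGoodWord_splitWord {x : List ℤ[i]} (hx : IsGoodWord x) : IsGoodWord (splitWord x) := by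
  obtain ⟨hc, v, b, rfl, hpb⟩ := hx
  obtain ⟨-, -, -, hpb₁, hb₁b₂, hb₂p⟩ := lastPairs_spec _ hpb
  have hprefix : IsChain HCFEdge (⟨2, -3⟩ :: ⟨-1, -2⟩ :: v) := hc.left_of_append
  have hrev : IsChain HCFEdge (⟨2, -3⟩ :: ⟨-1, -2⟩ :: v).reverse := by
    rw [isChain_reverse]
    exact hprefix.imp fun s t hst => hcfEdge_swap (s, t) hst
  refine ⟨?_, v ++ [b + 1, b - 1] ++ v.reverse ++ [⟨-1, -2⟩], ⟨2, -3⟩,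
    by rw [splitWord, dropLast_concat, getLastD_concat]; simp, by rw [getLastD_concat]; decide⟩
  rw [splitWord, dropLast_concat, getLastD_concat]
  refine (hprefix.append (isChain_pair.2 hb₁b₂) ?_).append hrev ?_
  · simpa [getLast?_cons_cons, getLast?_cons] using hpb₁
  · simpa [getLast?_cons_cons, getLast?_cons] using hb₂p

lemma seedA_eq_map : seedA = [⟨2, -3⟩, ⟨-1, -2⟩, ⟨-3, 1⟩].map GaussianInt.toComplex := by
  simp [seedA, GaussianInt.toComplex_def', sub_eq_add_neg, neg_mul]

lemma isGoodWord_seed : IsGoodWord [⟨2, -3⟩, ⟨-1, -2⟩, ⟨-3, 1⟩] :=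
  ⟨by decide, [], ⟨-3, 1⟩, rfl, by decide⟩

def goodWords : Set (List ℂ) := map GaussianInt.toComplex '' {x | IsGoodWord x}

lemma mapsTo_fop_goodWords : MapsTo fop goodWords goodWords := by
  rintro _ ⟨x, hx, rfl⟩
  refine ⟨_, isGoodWord_foldWord hx, ?_⟩
  rw [fop_eq_foldWord, map_foldWord]
  congr 1
  simp [dG, GaussianInt.toComplex_def']

lemma mapsTo_gop_goodWords : MapsTo gop goodWords goodWords := by
  rintro _ ⟨x, hx, rfl⟩
  exact ⟨_, isGoodWord_splitWord hx, by rw [gop_eq_splitWord, map_splitWord]⟩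

theorem stmt14 (n : ℕ) (h : Fin n → List ℂ → List ℂ)
    (hh : ∀ i : Fin n, h i = fop ∨ h i = gop)
    (c : List ℂ) (hc : c = (List.ofFn h).foldl (fun s t => t s) seedA) :
    ∃ z ∈ Fdom, ∀ (j : ℕ) (hj : j < c.length),
      gaussT^[j] z ≠ 0 ∧ nearestGaussian (gaussT^[j] z)⁻¹ = c.get ⟨j, hj⟩ := by
  have hgood : c ∈ goodWords := by
    rw [hc, seedA_eq_map]
    refine foldl_apply_mem (fun φ hφ => ?_) ⟨_, isGoodWord_seed, rfl⟩
    obtain ⟨i, rfl⟩ := mem_ofFn.1 hφ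
    rcases hh i with hi | hi <;> rw [hi]
    exacts [mapsTo_fop_goodWords, mapsTo_gop_goodWords]
  obtain ⟨x, hx, rfl⟩ := hgood
  exact ⟨_, hasHCFDigits_cfValue_of_isChain_hcfEdges hx.1 hx.getLast?_mem⟩
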